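/- In a pricing equilibrium of a reduced morning-commute corridor network (every bottleneck non-false), the arrival flow from each origin is all-or-nothing: for each i, μ̂_i > 0, q_i(t) = μ̂_i for every t in the open interval (t_i^-, t_i^+), q_i(t) = 0 for t ∉ [t_i^-, t_i^+], and consequently the length of the arrival-time window satisfies T_i = Q_i / μ̂_i. -/
import Mathlib


open MeasureTheory Finset Set
open scoped Classical

noncomputable section

/-- Basic corridor-network primitives: `N ≥ 1` bottlenecks, rush hour `[0,T]`,
capacities `μ`, demands `Q`, free-flow times `c`, and a continuous, strictly
quasi-convex schedule-delay function `s` with minimum `0` at `td ∈ (0,T)`. -/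
def CorridorNet (N : ℕ) (T td : ℝ) (μ Q c : ℕ → ℝ) (s : ℝ → ℝ) : Prop :=
  1 ≤ N ∧ 0 < T ∧ td ∈ Set.Ioo (0:ℝ) T ∧
  (∀ i ∈ Finset.Icc 1 N, 0 < μ i ∧ 0 < Q i ∧ 0 ≤ c i) ∧
  ContinuousOn s (Set.Icc 0 T) ∧ (∀ t ∈ Set.Icc (0:ℝ) T, 0 ≤ s t) ∧ s td = 0 ∧
  (∀ a ∈ Set.Icc (0:ℝ) T, ∀ b ∈ Set.Icc (0:ℝ) T, a ≠ b →
    ∀ l ∈ Set.Ioo (0:ℝ) 1, s (l * a + (1 - l) * b) < max (s a) (s b))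

/-- Pricing equilibrium: bounded measurable nonnegative flows `q` and prices `p`
with constants `ρ`, satisfying (E1), (E2), (E3). -/
def IsPricingEq (N : ℕ) (T : ℝ) (μ Q c : ℕ → ℝ) (s : ℝ → ℝ)
    (q p : ℕ → ℝ → ℝ) (ρ : ℕ → ℝ) : Prop :=
  (∀ i ∈ Finset.Icc 1 N, Measurable (q i) ∧ Measurable (p i)) ∧
  (∀ i ∈ Finset.Icc 1 N, ∃ M : ℝ, ∀ t ∈ Set.Icc (0:ℝ) T, q i t ≤ M ∧ p i t ≤ M) ∧
  (∀ i ∈ Finset.Icc 1 N, ∀ t ∈ Set.Icc (0:ℝ) T, 0 ≤ q i t ∧ 0 ≤ p i t) ∧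
  (∀ i ∈ Finset.Icc 1 N, ∀ t ∈ Set.Icc (0:ℝ) T,
    ρ i ≤ s t + c i + ∑ j ∈ Finset.Icc 1 i, p j t ∧
    (0 < q i t → s t + c i + ∑ j ∈ Finset.Icc 1 i, p j t = ρ i)) ∧
  (∀ i ∈ Finset.Icc 1 N, ∀ t ∈ Set.Icc (0:ℝ) T,
    (∑ j ∈ Finset.Icc i N, q j t) ≤ μ i ∧
    (0 < p i t → (∑ j ∈ Finset.Icc i N, q j t) = μ i)) ∧
  (∀ i ∈ Finset.Icc 1 N, ∫ t in (0:ℝ)..T, q i t = Q i)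

/-- `[a,b]` is the smallest closed interval containing `{t ∈ [0,T] : 0 < f t}`. -/
def IsWindow (T : ℝ) (f : ℝ → ℝ) (a b : ℝ) : Prop :=
  a ≤ b ∧
  {t | t ∈ Set.Icc (0:ℝ) T ∧ 0 < f t} ⊆ Set.Icc a b ∧
  ∀ a' b' : ℝ, {t | t ∈ Set.Icc (0:ℝ) T ∧ 0 < f t} ⊆ Set.Icc a' b' →
    Set.Icc a b ⊆ Set.Icc a' b'

/-- Bottleneck `i` is non-false: its price is positive at some time. -/
def NonFalse (T : ℝ) (p : ℕ → ℝ → ℝ) (i : ℕ) : Prop :=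
  ∃ t ∈ Set.Icc (0:ℝ) T, 0 < p i t

/-- `μ̂ i = μ i − μ (i+1)` for `i < N`, and `μ̂ N = μ N`. -/
def muhat (N : ℕ) (μ : ℕ → ℝ) (i : ℕ) : ℝ :=
  if i < N then μ i - μ (i + 1) else μ N


lemma sum_split (f : ℕ → ℝ) {a b c : ℕ} (h1 : a ≤ b + 1) (h2 : b ≤ c) :
    ∑ j ∈ Finset.Icc a c, f j = ∑ j ∈ Finset.Icc a b, f j + ∑ j ∈ Finset.Icc (b+1) c, f j := by
  have hd : Disjoint (Finset.Icc a b) (Finset.Icc (b+1) c) := by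
    rw [Finset.disjoint_left]; intro x hx hx'
    simp only [Finset.mem_Icc] at hx hx'; omega
  rw [← Finset.sum_union hd]
  congr 1
  ext x
  simp only [Finset.mem_Icc, Finset.mem_union]
  omega

lemma s_pos {T td : ℝ} {s : ℝ → ℝ} (hT : 0 < T) (htd : td ∈ Set.Ioo (0:ℝ) T)
    (hs0 : ∀ t ∈ Set.Icc (0:ℝ) T, 0 ≤ s t) (hstd : s td = 0)
    (hqc : ∀ a ∈ Set.Icc (0:ℝ) T, ∀ b ∈ Set.Icc (0:ℝ) T, a ≠ b →
      ∀ l ∈ Set.Ioo (0:ℝ) 1, s (l * a + (1 - l) * b) < max (s a) (s b))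
    {x : ℝ} (hx : x ∈ Set.Icc (0:ℝ) T) (hne : x ≠ td) : 0 < s x := by
  rcases lt_or_eq_of_le (hs0 x hx) with h | h
  · exact h
  · exfalso
    have hmem : (1/2) * x + (1 - 1/2) * td ∈ Set.Icc (0:ℝ) T := by
      constructor
      · have := hx.1; have := htd.1.le; linarith
      · have := hx.2; have := htd.2.le; linarith
    have hlt := hqc x hx td ⟨htd.1.le, htd.2.le⟩ hne (1/2) ⟨by norm_num, by norm_num⟩
    rw [hstd, ← h] at hlt
    have h2 := hs0 _ hmem
    simp only [max_self] at hlt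
    linarith

lemma s_left {T td : ℝ} {s : ℝ → ℝ} (hT : 0 < T) (htd : td ∈ Set.Ioo (0:ℝ) T)
    (hs0 : ∀ t ∈ Set.Icc (0:ℝ) T, 0 ≤ s t) (hstd : s td = 0)
    (hqc : ∀ a ∈ Set.Icc (0:ℝ) T, ∀ b ∈ Set.Icc (0:ℝ) T, a ≠ b →
      ∀ l ∈ Set.Ioo (0:ℝ) 1, s (l * a + (1 - l) * b) < max (s a) (s b))
    {a b : ℝ} (ha : 0 ≤ a) (hab : a < b) (hb : b ≤ td) : s b < s a := by
  have haT : a ∈ Set.Icc (0:ℝ) T := ⟨ha, le_trans (le_of_lt hab) (hb.trans htd.2.le)⟩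
  have hatd : a ≠ td := ne_of_lt (lt_of_lt_of_le hab hb)
  have hsa : 0 < s a := s_pos hT htd hs0 hstd hqc haT hatd
  rcases eq_or_lt_of_le hb with he | hbtd
  · rw [he, hstd]; exact hsa
  · set l := (td - b)/(td - a) with hl
    have h1 : 0 < td - a := by linarith
    have h2 : 0 < td - b := by linarith
    have hl0 : 0 < l := div_pos h2 h1
    have hl1 : l < 1 := (div_lt_one h1).mpr (by linarith)
    have hco : l * a + (1 - l) * td = b := by
      rw [hl]; field_simp; ring
    have htdT : td ∈ Set.Icc (0:ℝ) T := ⟨htd.1.le, htd.2.le⟩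
    have hlt := hqc a haT td htdT hatd l ⟨hl0, hl1⟩
    rw [hco, hstd, max_eq_left hsa.le] at hlt
    exact hlt

lemma s_right {T td : ℝ} {s : ℝ → ℝ} (hT : 0 < T) (htd : td ∈ Set.Ioo (0:ℝ) T)
    (hs0 : ∀ t ∈ Set.Icc (0:ℝ) T, 0 ≤ s t) (hstd : s td = 0)
    (hqc : ∀ a ∈ Set.Icc (0:ℝ) T, ∀ b ∈ Set.Icc (0:ℝ) T, a ≠ b →
      ∀ l ∈ Set.Ioo (0:ℝ) 1, s (l * a + (1 - l) * b) < max (s a) (s b))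
    {a b : ℝ} (hta : td ≤ a) (hab : a < b) (hbT : b ≤ T) : s a < s b := by
  have hbTm : b ∈ Set.Icc (0:ℝ) T := ⟨le_trans htd.1.le (le_trans hta hab.le), hbT⟩
  have hbtd : b ≠ td := ne_of_gt (lt_of_le_of_lt hta hab)
  have hsb : 0 < s b := s_pos hT htd hs0 hstd hqc hbTm hbtd
  rcases eq_or_lt_of_le hta with he | hatd
  · rw [← he, hstd]; exact hsb
  · set l := (a - td)/(b - td) with hl
    have h1 : 0 < b - td := by linarith
    have h2 : 0 < a - td := by linarith
    have hl0 : 0 < l := div_pos h2 h1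
    have hl1 : l < 1 := (div_lt_one h1).mpr (by linarith)
    have hco : l * b + (1 - l) * td = a := by
      rw [hl]; field_simp; ring
    have htdT : td ∈ Set.Icc (0:ℝ) T := ⟨htd.1.le, htd.2.le⟩
    have hlt := hqc b hbTm td htdT hbtd l ⟨hl0, hl1⟩
    rw [hco, hstd, max_eq_left hsb.le] at hlt
    exact hlt

/-- in a reduced network the arrival flow from each origin is
all-or-nothing at rate `μ̂ i`, and `T_i = Q_i / μ̂_i`. -/
theorem stmt7 (N : ℕ) (T td : ℝ) (μ Q c : ℕ → ℝ) (s : ℝ → ℝ)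
    (q p : ℕ → ℝ → ℝ) (ρ : ℕ → ℝ) (tm tp : ℕ → ℝ)
    (hnet : CorridorNet N T td μ Q c s)
    (heq : IsPricingEq N T μ Q c s q p ρ)
    (hwin : ∀ i ∈ Finset.Icc 1 N, IsWindow T (q i) (tm i) (tp i))
    (hreg : ∀ i ∈ Finset.Icc 1 N, s (tm i) = ρ i - c i ∧ s (tp i) = ρ i - c i)
    (hred : ∀ i ∈ Finset.Icc 1 N, NonFalse T p i)
    :
    ∀ i ∈ Finset.Icc 1 N,
      0 < muhat N μ i ∧
      (∀ t ∈ Set.Ioo (tm i) (tp i), q i t = muhat N μ i) ∧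
      (∀ t ∈ Set.Icc (0:ℝ) T, t ∉ Set.Icc (tm i) (tp i) → q i t = 0) ∧
      tp i - tm i = Q i / muhat N μ i := by
  obtain ⟨hN, hT, htd, hmQc, hscont, hs0, hstd, hqc⟩ := hnet
  obtain ⟨hmeas, hbdd, hpos, hE1, hE2, hE3⟩ := heq
  have hmem : ∀ i, 1 ≤ i → i ≤ N → i ∈ Finset.Icc 1 N :=
    fun i h1 h2 => Finset.mem_Icc.mpr ⟨h1, h2⟩
  have hq0 : ∀ i, 1 ≤ i → i ≤ N → ∀ t ∈ Set.Icc (0:ℝ) T, 0 ≤ q i t :=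
    fun i h1 h2 t ht => (hpos i (hmem i h1 h2) t ht).1
  have hp0 : ∀ i, 1 ≤ i → i ≤ N → ∀ t ∈ Set.Icc (0:ℝ) T, 0 ≤ p i t :=
    fun i h1 h2 t ht => (hpos i (hmem i h1 h2) t ht).2
  -- support has nonzero measure
  have hAne : ∀ i, 1 ≤ i → i ≤ N →
      volume {t | t ∈ Set.Icc (0:ℝ) T ∧ 0 < q i t} ≠ 0 := by
    intro i h1 h2 hc
    have hae : ∀ᵐ x : ℝ, x ∉ {t | t ∈ Set.Icc (0:ℝ) T ∧ 0 < q i t} :=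
      measure_eq_zero_iff_ae_notMem.mp hc
    have hz : ∫ t in (0:ℝ)..T, q i t = ∫ t in (0:ℝ)..T, (0:ℝ) := by
      apply intervalIntegral.integral_congr_ae
      filter_upwards [hae] with x hx hxI
      rw [Set.uIoc_of_le hT.le] at hxI
      have hxT : x ∈ Set.Icc (0:ℝ) T := ⟨hxI.1.le, hxI.2⟩
      by_contra hne
      exact hx ⟨hxT, lt_of_le_of_ne (hq0 i h1 h2 x hxT) (Ne.symm hne)⟩
    have hQ0 : Q i = 0 := by
      rw [← hE3 i (hmem i h1 h2), hz, intervalIntegral.integral_zero]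
    have := (hmQc i (hmem i h1 h2)).2.1
    linarith
  have hsupp : ∀ i, 1 ≤ i → i ≤ N → ∃ t, t ∈ Set.Icc (0:ℝ) T ∧ 0 < q i t := by
    intro i h1 h2
    obtain ⟨t, ht⟩ := nonempty_of_measure_ne_zero (hAne i h1 h2)
    exact ⟨t, ht.1, ht.2⟩
  -- a point strictly inside the window with positive flow
  have hT1 : ∀ i, 1 ≤ i → i ≤ N →
      ∃ t1, t1 ∈ Set.Icc (0:ℝ) T ∧ 0 < q i t1 ∧ tm i < t1 ∧ t1 < tp i := by
    intro i h1 h2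
    have hA := hAne i h1 h2
    have hsub := (hwin i (hmem i h1 h2)).2.1
    by_contra hc
    push_neg at hc
    have hss : {t | t ∈ Set.Icc (0:ℝ) T ∧ 0 < q i t} ⊆ ({tm i, tp i} : Set ℝ) := by
      intro t ht
      have htw := hsub ht
      rcases eq_or_lt_of_le htw.1 with h | h
      · exact Or.inl h.symm
      rcases eq_or_lt_of_le htw.2 with h' | h'
      · exact Or.inr h'
      · exact absurd (hc t ht.1 ht.2 h) (not_le.mpr h')
    refine hA (measure_mono_null hss ?_)
    exact Set.Countable.measure_zero ((Set.countable_singleton (tp i)).insert (tm i)) _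
  -- μ nonincreasing
  have hmuStep : ∀ i, 1 ≤ i → i < N → μ (i+1) ≤ μ i := by
    intro i h1 hiN
    obtain ⟨t0, ht0T, ht0p⟩ := hred (i+1) (hmem (i+1) (by omega) (by omega))
    have hb := (hE2 (i+1) (hmem (i+1) (by omega) (by omega)) t0 ht0T).2 ht0p
    have hle := (hE2 i (hmem i h1 (by omega)) t0 ht0T).1
    have hsp : ∑ j ∈ Finset.Icc i N, q j t0
        = q i t0 + ∑ j ∈ Finset.Icc (i+1) N, q j t0 := by
      have h := sum_split (fun j => q j t0) (a := i) (b := i) (c := N) (by omega) (by omega)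
      rw [Finset.Icc_self, Finset.sum_singleton] at h; exact h
    have := hq0 i h1 (by omega) t0 ht0T
    linarith
  have hmuLe : ∀ a b, 1 ≤ a → a ≤ b → b ≤ N → μ b ≤ μ a := by
    intro a b h1 hab hbN
    induction b with
    | zero => omega
    | succ k ih =>
      rcases Nat.eq_or_lt_of_le hab with h | h
      · rw [h]
      · exact le_trans (hmuStep k (by omega) (by omega)) (ih (by omega) (by omega))
  -- σ nondecreasing
  have hsigStep : ∀ k, 1 ≤ k → k < N → ρ k - c k ≤ ρ (k+1) - c (k+1) := by
    intro k h1 hk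
    obtain ⟨t1, ht1T, ht1q⟩ := hsupp (k+1) (by omega) (by omega)
    have htight := (hE1 (k+1) (hmem (k+1) (by omega) (by omega)) t1 ht1T).2 ht1q
    have hge := (hE1 k (hmem k h1 (by omega)) t1 ht1T).1
    have hsplit : ∑ j ∈ Finset.Icc 1 (k+1), p j t1
        = ∑ j ∈ Finset.Icc 1 k, p j t1 + p (k+1) t1 := by
      have h := sum_split (fun j => p j t1) (a := 1) (b := k) (c := k+1) (by omega) (by omega)
      rw [Finset.Icc_self, Finset.sum_singleton] at h; exact h
    have hpk1 := hp0 (k+1) (by omega) (by omega) t1 ht1T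
    rw [hsplit] at htight
    linarith
  have hsigLe : ∀ a b, 1 ≤ a → a ≤ b → b ≤ N → ρ a - c a ≤ ρ b - c b := by
    intro a b h1 hab hbN
    induction b with
    | zero => omega
    | succ k ih =>
      rcases Nat.eq_or_lt_of_le hab with h | h
      · rw [h]
      · exact le_trans (ih (by omega) (by omega)) (hsigStep k (by omega) (by omega))
  -- propagation of σ-equalities upward
  have hProp : ∀ k, 1 ≤ k → k < N → (ρ (k+1) - c (k+1) = ρ k - c k) →
      k + 1 < N ∧ ρ (k+2) - c (k+2) = ρ (k+1) - c (k+1) := by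
    intro k h1 hk heqs
    obtain ⟨t0, ht0T, ht0p⟩ := hred (k+1) (hmem (k+1) (by omega) (by omega))
    have hbind := (hE2 (k+1) (hmem (k+1) (by omega) (by omega)) t0 ht0T).2 ht0p
    have hq10 : q (k+1) t0 = 0 := by
      by_contra hne
      have hpos' : 0 < q (k+1) t0 :=
        lt_of_le_of_ne (hq0 (k+1) (by omega) (by omega) t0 ht0T) (Ne.symm hne)
      have htight := (hE1 (k+1) (hmem (k+1) (by omega) (by omega)) t0 ht0T).2 hpos'
      have hge := (hE1 k (hmem k h1 (by omega)) t0 ht0T).1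
      have hsplit : ∑ j ∈ Finset.Icc 1 (k+1), p j t0
          = ∑ j ∈ Finset.Icc 1 k, p j t0 + p (k+1) t0 := by
        have h := sum_split (fun j => p j t0) (a := 1) (b := k) (c := k+1) (by omega) (by omega)
        rw [Finset.Icc_self, Finset.sum_singleton] at h; exact h
      rw [hsplit] at htight
      linarith
    rcases Nat.lt_or_ge (k+1) N with hlt | hge2
    · refine ⟨hlt, ?_⟩
      have hsplit2 : ∑ j ∈ Finset.Icc (k+1) N, q j t0
          = q (k+1) t0 + ∑ j ∈ Finset.Icc (k+2) N, q j t0 := by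
        have h := sum_split (fun j => q j t0) (a := k+1) (b := k+1) (c := N) (by omega) (by omega)
        rw [Finset.Icc_self, Finset.sum_singleton] at h; exact h
      have h2 : ∑ j ∈ Finset.Icc (k+2) N, q j t0 = μ (k+1) := by
        rw [hq10] at hsplit2; linarith
      have h3 : ∑ j ∈ Finset.Icc (k+2) N, q j t0 ≤ μ (k+2) :=
        (hE2 (k+2) (hmem (k+2) (by omega) (by omega)) t0 ht0T).1
      have hmu : μ (k+2) = μ (k+1) :=
        le_antisymm (hmuStep (k+1) (by omega) hlt) (by linarith)
      obtain ⟨t1, ht1T, ht1q⟩ := hsupp (k+1) (by omega) (by omega)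
      have hcap : ∑ j ∈ Finset.Icc (k+1) N, q j t1 ≤ μ (k+1) :=
        (hE2 (k+1) (hmem (k+1) (by omega) (by omega)) t1 ht1T).1
      have hsplit3 : ∑ j ∈ Finset.Icc (k+1) N, q j t1
          = q (k+1) t1 + ∑ j ∈ Finset.Icc (k+2) N, q j t1 := by
        have h := sum_split (fun j => q j t1) (a := k+1) (b := k+1) (c := N) (by omega) (by omega)
        rw [Finset.Icc_self, Finset.sum_singleton] at h; exact h
      have hlt2 : ∑ j ∈ Finset.Icc (k+2) N, q j t1 < μ (k+2) := by
        rw [hmu]; linarith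
      have hp2 : p (k+2) t1 = 0 := by
        by_contra hne
        have hpp : 0 < p (k+2) t1 :=
          lt_of_le_of_ne (hp0 (k+2) (by omega) (by omega) t1 ht1T) (Ne.symm hne)
        have := (hE2 (k+2) (hmem (k+2) (by omega) (by omega)) t1 ht1T).2 hpp
        linarith
      have htight := (hE1 (k+1) (hmem (k+1) (by omega) (by omega)) t1 ht1T).2 ht1q
      have hgeq := (hE1 (k+2) (hmem (k+2) (by omega) (by omega)) t1 ht1T).1
      have hsplit4 : ∑ j ∈ Finset.Icc 1 (k+2), p j t1
          = ∑ j ∈ Finset.Icc 1 (k+1), p j t1 + p (k+2) t1 := by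
        have h := sum_split (fun j => p j t1) (a := 1) (b := k+1) (c := k+2) (by omega) (by omega)
        rw [Finset.Icc_self, Finset.sum_singleton] at h; exact h
      have hmono := hsigStep (k+1) (by omega) hlt
      rw [hsplit4, hp2] at hgeq
      linarith
    · exfalso
      have hkN : k + 1 = N := by omega
      rw [hkN] at hbind hq10
      rw [Finset.Icc_self, Finset.sum_singleton, hq10] at hbind
      have := (hmQc N (hmem N (by omega) le_rfl)).1
      rw [← hkN] at this
      rw [hkN] at this
      linarith
  -- σ strictly increasing
  have hsigStrict : ∀ k, 1 ≤ k → k < N → ρ k - c k < ρ (k+1) - c (k+1) := by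
    intro k h1 hk
    rcases lt_or_eq_of_le (hsigStep k h1 hk) with h | h
    · exact h
    · exfalso
      have chain : ∀ j, k ≤ j → j < N → ρ (j+1) - c (j+1) = ρ j - c j := by
        intro j
        induction j with
        | zero => intro hkj _; exact absurd hkj (by omega)
        | succ n ih =>
          intro hkj hjN
          rcases Nat.eq_or_lt_of_le hkj with he | hlt'
          · rw [← he]; exact h.symm
          · exact (hProp n (by omega) (by omega) (ih (by omega) (by omega))).2
      obtain ⟨n, rfl⟩ : ∃ n, N = n + 1 := ⟨N - 1, by omega⟩
      have hch := chain n (by omega) (by omega)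
      exact absurd (hProp n (by omega) (by omega) hch).1 (by omega)
  have hStrictLe : ∀ a b, 1 ≤ a → a < b → b ≤ N → ρ a - c a < ρ b - c b :=
    fun a b h1 hab hbN =>
      lt_of_lt_of_le (hsigStrict a h1 (by omega)) (hsigLe (a+1) b (by omega) (by omega) hbN)
  -- capacity binding below the critical schedule-delay level
  have hBind : ∀ i, 1 ≤ i → i ≤ N → ∀ t, t ∈ Set.Icc (0:ℝ) T → s t < ρ i - c i →
      ∑ j ∈ Finset.Icc i N, q j t = μ i := by
    intro i h1 hN' t htT hst
    have hgei := (hE1 i (hmem i h1 hN') t htT).1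
    have hPnn : 0 ≤ ∑ j ∈ Finset.Icc 1 i, p j t := by
      apply Finset.sum_nonneg
      intro j hj
      have hj' := Finset.mem_Icc.mp hj
      exact hp0 j hj'.1 (hj'.2.trans hN') t htT
    have hPpos : 0 < ∑ j ∈ Finset.Icc 1 i, p j t := by
      rcases lt_or_eq_of_le hPnn with hlt | heq0
      · exact hlt
      · exfalso; rw [← heq0] at hgei; linarith
    set F := (Finset.Icc 1 i).filter (fun j => 0 < p j t) with hF
    have hFne : F.Nonempty := by
      by_contra hne
      rw [Finset.not_nonempty_iff_eq_empty] at hne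
      have hz : ∑ j ∈ Finset.Icc 1 i, p j t = 0 := by
        apply Finset.sum_eq_zero
        intro j hj
        by_contra hpj
        have hj' := Finset.mem_Icc.mp hj
        have hjF : j ∈ F := Finset.mem_filter.mpr
          ⟨hj, lt_of_le_of_ne (hp0 j hj'.1 (hj'.2.trans hN') t htT) (Ne.symm hpj)⟩
        rw [hne] at hjF
        exact absurd hjF (Finset.notMem_empty j)
      linarith
    set j := F.max' hFne with hj
    have hjF : j ∈ F := Finset.max'_mem F hFne
    obtain ⟨hjIcc, hjp⟩ := Finset.mem_filter.mp hjF
    obtain ⟨hj1, hji⟩ := Finset.mem_Icc.mp hjIcc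
    have hjN : j ≤ N := hji.trans hN'
    have hbj : ∑ l ∈ Finset.Icc j N, q l t = μ j := (hE2 j (hmem j hj1 hjN) t htT).2 hjp
    have hptail : ∀ l, j < l → l ≤ i → p l t = 0 := by
      intro l hl1 hl2
      by_contra hne
      have hlF : l ∈ F := Finset.mem_filter.mpr
        ⟨Finset.mem_Icc.mpr ⟨by omega, hl2⟩,
         lt_of_le_of_ne (hp0 l (by omega) (hl2.trans hN') t htT) (Ne.symm hne)⟩
      exact absurd (Finset.le_max' F l hlF) (by omega)
    have hPeq : ∀ k, j ≤ k → k ≤ i → ∑ l ∈ Finset.Icc 1 i, p l t = ∑ l ∈ Finset.Icc 1 k, p l t := by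
      intro k hk1 hk2
      rw [sum_split (fun l => p l t) (a := 1) (b := k) (c := i) (by omega) hk2]
      have hz : ∑ l ∈ Finset.Icc (k+1) i, p l t = 0 := by
        apply Finset.sum_eq_zero
        intro l hl
        have hl' := Finset.mem_Icc.mp hl
        exact hptail l (by omega) hl'.2
      rw [hz]; ring
    have hqk0 : ∀ k, j ≤ k → k < i → q k t = 0 := by
      intro k hk1 hk2
      by_contra hne
      have hk1' : 1 ≤ k := le_trans hj1 hk1
      have hqpos : 0 < q k t :=
        lt_of_le_of_ne (hq0 k hk1' (by omega) t htT) (Ne.symm hne)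
      have htk := (hE1 k (hmem k hk1' (by omega)) t htT).2 hqpos
      have hsl := hStrictLe k i hk1' hk2 hN'
      have hPk := hPeq k hk1 (le_of_lt hk2)
      linarith
    have hsplitJ : ∑ l ∈ Finset.Icc j N, q l t
        = ∑ l ∈ Finset.Icc j (i-1), q l t + ∑ l ∈ Finset.Icc i N, q l t := by
      have h := sum_split (fun l => q l t) (a := j) (b := i - 1) (c := N) (by omega) (by omega)
      rw [show i - 1 + 1 = i by omega] at h
      exact h
    have hz : ∑ l ∈ Finset.Icc j (i-1), q l t = 0 := by
      apply Finset.sum_eq_zero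
      intro l hl
      have hl' := Finset.mem_Icc.mp hl
      exact hqk0 l hl'.1 (by omega)
    have hle1 : ∑ l ∈ Finset.Icc i N, q l t ≤ μ i := (hE2 i (hmem i h1 hN') t htT).1
    have hle2 : μ i ≤ μ j := hmuLe j i hj1 hji hN'
    linarith
  -- main conclusions
  intro i hiIcc
  obtain ⟨hi1, hiN⟩ := Finset.mem_Icc.mp hiIcc
  have hwio := hwin i hiIcc
  have hwsub : Set.Icc (tm i) (tp i) ⊆ Set.Icc (0:ℝ) T :=
    hwio.2.2 0 T (fun t ht => ht.1)
  have h0tm : 0 ≤ tm i := (hwsub (Set.left_mem_Icc.mpr hwio.1)).1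
  have htpT : tp i ≤ T := (hwsub (Set.right_mem_Icc.mpr hwio.1)).2
  obtain ⟨t1, ht1T, ht1q, ht1a, ht1b⟩ := hT1 i hi1 hiN
  have htmtp : tm i < tp i := lt_trans ht1a ht1b
  have hreg_i := hreg i hiIcc
  have htmT : tm i ≤ T := le_trans htmtp.le htpT
  have hslt : ∀ t ∈ Set.Ioo (tm i) (tp i), s t < ρ i - c i := by
    have htmtd : tm i < td := by
      by_contra hcon
      push_neg at hcon
      have hlt := s_right hT htd hs0 hstd hqc hcon htmtp htpT
      rw [hreg_i.1, hreg_i.2] at hlt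
      exact lt_irrefl _ hlt
    have htdtp : td < tp i := by
      by_contra hcon
      push_neg at hcon
      have hlt := s_left hT htd hs0 hstd hqc h0tm htmtp hcon
      rw [hreg_i.1, hreg_i.2] at hlt
      exact lt_irrefl _ hlt
    intro t ht
    rcases le_or_gt t td with h | h
    · have hlt := s_left hT htd hs0 hstd hqc h0tm ht.1 h
      rwa [hreg_i.1] at hlt
    · have hlt := s_right hT htd hs0 hstd hqc h.le ht.2 htpT
      rwa [hreg_i.2] at hlt
  have hval : ∀ t ∈ Set.Ioo (tm i) (tp i), q i t = muhat N μ i := by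
    intro t ht
    have htT : t ∈ Set.Icc (0:ℝ) T := hwsub ⟨ht.1.le, ht.2.le⟩
    have hst := hslt t ht
    have hb1 := hBind i hi1 hiN t htT hst
    rcases Nat.lt_or_ge i N with hiN' | hge
    · have hb2 := hBind (i+1) (by omega) (by omega) t htT
        (lt_trans hst (hsigStrict i hi1 hiN'))
      have hsp : ∑ l ∈ Finset.Icc i N, q l t
          = q i t + ∑ l ∈ Finset.Icc (i+1) N, q l t := by
        have h := sum_split (fun l => q l t) (a := i) (b := i) (c := N) (by omega) (by omega)
        rw [Finset.Icc_self, Finset.sum_singleton] at h; exact h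
      simp only [muhat]
      rw [if_pos hiN']
      linarith
    · have hiN2 : i = N := by omega
      simp only [muhat]
      rw [if_neg (by omega)]
      rw [hiN2] at hb1 ⊢
      rw [Finset.Icc_self, Finset.sum_singleton] at hb1
      exact hb1
  have hmuhat : 0 < muhat N μ i := by
    rw [← hval t1 ⟨ht1a, ht1b⟩]
    exact ht1q
  have hzero : ∀ t ∈ Set.Icc (0:ℝ) T, t ∉ Set.Icc (tm i) (tp i) → q i t = 0 := by
    intro t htT hnt
    by_contra hne
    exact hnt (hwio.2.1 ⟨htT, lt_of_le_of_ne (hq0 i hi1 hiN t htT) (Ne.symm hne)⟩)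
  refine ⟨hmuhat, hval, hzero, ?_⟩
  obtain ⟨M, hM⟩ := hbdd i hiIcc
  have hmq := (hmeas i hiIcc).1
  have hIONT : IntegrableOn (q i) (Set.Icc (0:ℝ) T) volume := by
    refine Measure.integrableOn_of_bounded (M := M) measure_Icc_lt_top.ne
      hmq.aestronglyMeasurable ?_
    refine (ae_restrict_iff' measurableSet_Icc).mpr (Filter.Eventually.of_forall ?_)
    intro x hx
    rw [Real.norm_eq_abs, abs_of_nonneg (hq0 i hi1 hiN x hx)]
    exact (hM x hx).1
  have hInt : ∀ a b : ℝ, 0 ≤ a → a ≤ b → b ≤ T → IntervalIntegrable (q i) volume a b := by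
    intro a b h0 hab hbT
    rw [intervalIntegrable_iff_integrableOn_Ioc_of_le hab]
    exact hIONT.mono_set (fun x hx => ⟨le_trans h0 hx.1.le, hx.2.trans hbT⟩)
  have e1 : ∫ t in (0:ℝ)..(tm i), q i t = 0 := by
    have hcg : ∫ t in (0:ℝ)..(tm i), q i t = ∫ t in (0:ℝ)..(tm i), (0:ℝ) := by
      apply intervalIntegral.integral_congr_ae
      have hae : ∀ᵐ x : ℝ, x ∉ ({tm i} : Set ℝ) :=
        measure_eq_zero_iff_ae_notMem.mp Real.volume_singleton
      filter_upwards [hae] with x hx hxI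
      rw [Set.uIoc_of_le h0tm] at hxI
      have hxT : x ∈ Set.Icc (0:ℝ) T := ⟨hxI.1.le, hxI.2.trans htmT⟩
      apply hzero x hxT
      intro hmem'
      exact hx (by simpa using le_antisymm hxI.2 hmem'.1)
    rw [hcg, intervalIntegral.integral_zero]
  have e3 : ∫ t in (tp i)..T, q i t = 0 := by
    have hcg : ∫ t in (tp i)..T, q i t = ∫ t in (tp i)..T, (0:ℝ) := by
      apply intervalIntegral.integral_congr_ae
      refine Filter.Eventually.of_forall ?_
      intro x hxI
      rw [Set.uIoc_of_le htpT] at hxI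
      have h0tp : 0 ≤ tp i := le_trans h0tm htmtp.le
      have hxT : x ∈ Set.Icc (0:ℝ) T := ⟨le_trans h0tp hxI.1.le, hxI.2⟩
      apply hzero x hxT
      intro hmem'
      exact absurd hmem'.2 (not_le.mpr hxI.1)
    rw [hcg, intervalIntegral.integral_zero]
  have e2 : ∫ t in (tm i)..(tp i), q i t = (tp i - tm i) * muhat N μ i := by
    have hcg : ∫ t in (tm i)..(tp i), q i t = ∫ t in (tm i)..(tp i), muhat N μ i := by
      apply intervalIntegral.integral_congr_ae
      have hae : ∀ᵐ x : ℝ, x ∉ ({tp i} : Set ℝ) :=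
        measure_eq_zero_iff_ae_notMem.mp Real.volume_singleton
      filter_upwards [hae] with x hx hxI
      rw [Set.uIoc_of_le htmtp.le] at hxI
      have hxtp : x < tp i := lt_of_le_of_ne hxI.2 (fun hh => hx (by simp [hh]))
      exact hval x ⟨hxI.1, hxtp⟩
    rw [hcg, intervalIntegral.integral_const, smul_eq_mul]
  have hadd1 :=
    intervalIntegral.integral_add_adjacent_intervals (f := q i) (μ := volume)
      (hInt 0 (tm i) le_rfl h0tm htmT)
      (hInt (tm i) (tp i) h0tm htmtp.le htpT)
  have hadd2 :=
    intervalIntegral.integral_add_adjacent_intervals (f := q i) (μ := volume)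
      (hInt 0 (tp i) le_rfl (le_trans h0tm htmtp.le) htpT)
      (hInt (tp i) T (le_trans h0tm htmtp.le) htpT le_rfl)
  have hQeq : Q i = (tp i - tm i) * muhat N μ i := by
    rw [← hE3 i hiIcc, ← hadd2, ← hadd1, e1, e2, e3]
    ring
  rw [eq_div_iff hmuhat.ne']
  linarith
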